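/- arXiv:2411.09552 — 4 statements merged into one kernel-verified Lean document; each statement's English description precedes it below -/
import Mathlib

section
/- Let Y be a finite nonempty output space and ℓ : Y → ℝ a loss function. Define a random variable M on Y by P[M = y] proportional to exp(-ε·ℓ(y)/2) for ε > 0. Then for every β ∈ (0,1), letting τ = (2/ε)·ln(|Y|/β), we have P[ℓ(M) ≥ min_{y∈Y} ℓ(y) + τ] ≤ β. -/
open Classical in
/-- Utility guarantee of the exponential mechanism (sensitivity 1): for a finite nonempty
output space `Y` with loss `ℓ`, sampling `y` with probability proportional to
`exp (-ε ℓ(y) / 2)`, the probability that the sampled loss is at least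
`min ℓ + τ`, where `τ = (2/ε) ln (|Y|/β)`, is at most `β`. -/
theorem exponential_mechanism_utility {Y : Type*} [Fintype Y] [Nonempty Y]
    (ℓ : Y → ℝ) (ε : ℝ) (hε : 0 < ε) (β : ℝ) (hβ : β ∈ Set.Ioo (0 : ℝ) 1)
    (τ : ℝ) (hτ : τ = (2 / ε) * Real.log ((Fintype.card Y : ℝ) / β)) :
    (∑ y ∈ Finset.univ.filter
        (fun y => Finset.univ.inf' Finset.univ_nonempty ℓ + τ ≤ ℓ y),
        Real.exp (-ε * ℓ y / 2)) /
      (∑ y : Y, Real.exp (-ε * ℓ y / 2)) ≤ β := by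
  obtain ⟨hβ0, hβ1⟩ := hβ
  set m : ℝ := Finset.univ.inf' Finset.univ_nonempty ℓ with hm
  have hcard : (0 : ℝ) < (Fintype.card Y : ℝ) := by
    exact_mod_cast Fintype.card_pos
  have hden : (0 : ℝ) < ∑ y : Y, Real.exp (-ε * ℓ y / 2) :=
    Finset.sum_pos (fun y _ => Real.exp_pos _) Finset.univ_nonempty
  rw [div_le_iff₀ hden]
  -- exp(-ε τ / 2) = β / card
  have hexpτ : Real.exp (-ε * τ / 2) = β / (Fintype.card Y : ℝ) := by
    have : -ε * τ / 2 = Real.log (β / (Fintype.card Y : ℝ)) := by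
      rw [hτ, show β / (Fintype.card Y : ℝ) = ((Fintype.card Y : ℝ) / β)⁻¹ by
        rw [inv_div], Real.log_inv]
      field_simp
    rw [this, Real.exp_log (by positivity)]
  -- numerator bound
  have hnum : (∑ y ∈ Finset.univ.filter
        (fun y => m + τ ≤ ℓ y), Real.exp (-ε * ℓ y / 2))
      ≤ (Fintype.card Y : ℝ) * Real.exp (-ε * (m + τ) / 2) := by
    calc (∑ y ∈ Finset.univ.filter (fun y => m + τ ≤ ℓ y), Real.exp (-ε * ℓ y / 2))
        ≤ ∑ _y ∈ Finset.univ.filter (fun y => m + τ ≤ ℓ y),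
            Real.exp (-ε * (m + τ) / 2) := by
          refine Finset.sum_le_sum fun y hy => ?_
          have hy' : m + τ ≤ ℓ y := (Finset.mem_filter.mp hy).2
          apply Real.exp_le_exp.mpr
          nlinarith
      _ = (Finset.univ.filter (fun y : Y => m + τ ≤ ℓ y)).card
            * Real.exp (-ε * (m + τ) / 2) := by
          rw [Finset.sum_const, nsmul_eq_mul]
      _ ≤ (Fintype.card Y : ℝ) * Real.exp (-ε * (m + τ) / 2) := by
          gcongr
          exact_mod_cast Finset.card_filter_le _ _
  refine hnum.trans ?_
  -- card * exp(-ε(m+τ)/2) = β * exp(-ε m / 2) ≤ β * sum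
  have hkey : (Fintype.card Y : ℝ) * Real.exp (-ε * (m + τ) / 2)
      = β * Real.exp (-ε * m / 2) := by
    have : -ε * (m + τ) / 2 = -ε * m / 2 + -ε * τ / 2 := by ring
    rw [this, Real.exp_add, hexpτ]
    field_simp
  rw [hkey]
  gcongr
  obtain ⟨y₀, _, hy₀⟩ := Finset.exists_mem_eq_inf' (Finset.univ_nonempty (α := Y)) ℓ
  calc Real.exp (-ε * m / 2) = Real.exp (-ε * ℓ y₀ / 2) := by rw [hm, hy₀]
    _ ≤ ∑ y : Y, Real.exp (-ε * ℓ y / 2) :=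
        Finset.single_le_sum (f := fun y => Real.exp (-ε * ℓ y / 2))
          (fun y _ => (Real.exp_pos _).le) (Finset.mem_univ y₀)
end

section
/- Let X be a set of inputs with a symmetric neighboring relation ~, Y a finite set, and ℓ : X × Y → ℝ a loss with sensitivity Δ, i.e., |ℓ(x,y) - ℓ(x',y)| ≤ Δ for all neighboring x ~ x' and all y ∈ Y. Then the exponential mechanism M with P[M(x) = y] ∝ exp(-ε·ℓ(x,y)/(2Δ)) satisfies ε-differential privacy: for all x ~ x' and all y ∈ Y, P[M(x) = y] ≤ e^ε · P[M(x') = y]. -/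
/-- Privacy of the exponential mechanism: if the loss `ℓ : X × Y → ℝ` has sensitivity `Δ`
with respect to a symmetric neighboring relation `adj` on `X`, then the exponential
mechanism, which outputs `y` on input `x` with probability proportional to
`exp (-ε ℓ(x,y) / (2Δ))`, is `ε`-differentially private: for all neighboring `x ~ x'` and
every `y`, `P[M(x) = y] ≤ exp ε · P[M(x') = y]`. -/
theorem exponential_mechanism_private {X Y : Type*} [Fintype Y] [Nonempty Y]
    (adj : X → X → Prop) (hsymm : Symmetric adj)
    (ℓ : X → Y → ℝ) (Δ ε : ℝ) (hΔ : 0 < Δ) (hε : 0 < ε)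
    (hsens : ∀ x x', adj x x' → ∀ y, |ℓ x y - ℓ x' y| ≤ Δ) :
    ∀ x x', adj x x' → ∀ y : Y,
      Real.exp (-ε * ℓ x y / (2 * Δ)) /
          (∑ y' : Y, Real.exp (-ε * ℓ x y' / (2 * Δ))) ≤
        Real.exp ε *
          (Real.exp (-ε * ℓ x' y / (2 * Δ)) /
            (∑ y' : Y, Real.exp (-ε * ℓ x' y' / (2 * Δ)))) := by
  intro x x' h y
  have h2Δ : (0:ℝ) < 2 * Δ := by linarith
  have hS : ∀ z : X, 0 < ∑ y' : Y, Real.exp (-ε * ℓ z y' / (2 * Δ)) := fun z =>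
    Finset.sum_pos (fun _ _ => Real.exp_pos _) Finset.univ_nonempty
  have key : ∀ a b : X, adj a b → ∀ y : Y,
      Real.exp (-ε * ℓ a y / (2 * Δ)) ≤
        Real.exp (ε / 2) * Real.exp (-ε * ℓ b y / (2 * Δ)) := by
    intro a b hab y
    rw [← Real.exp_add]
    apply Real.exp_le_exp.2
    have h2 := (abs_le.1 (hsens b a (hsymm hab) y)).2
    rw [div_le_iff₀ h2Δ, add_mul, div_mul_cancel₀ _ (ne_of_gt h2Δ)]
    nlinarith
  have h1 := key x x' h y
  have h2sum : (∑ y' : Y, Real.exp (-ε * ℓ x' y' / (2 * Δ))) ≤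
      Real.exp (ε / 2) * ∑ y' : Y, Real.exp (-ε * ℓ x y' / (2 * Δ)) := by
    rw [Finset.mul_sum]
    exact Finset.sum_le_sum fun y' _ => key x' x (hsymm h) y'
  rw [← mul_div_assoc, div_le_div_iff₀ (hS x) (hS x')]
  calc Real.exp (-ε * ℓ x y / (2 * Δ)) * ∑ y' : Y, Real.exp (-ε * ℓ x' y' / (2 * Δ))
      ≤ (Real.exp (ε / 2) * Real.exp (-ε * ℓ x' y / (2 * Δ))) *
        (Real.exp (ε / 2) * ∑ y' : Y, Real.exp (-ε * ℓ x y' / (2 * Δ))) := by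
        apply mul_le_mul h1 h2sum (le_of_lt (hS x')) (by positivity)
    _ = (Real.exp (ε / 2) * Real.exp (ε / 2)) * Real.exp (-ε * ℓ x' y / (2 * Δ)) *
        ∑ y' : Y, Real.exp (-ε * ℓ x y' / (2 * Δ)) := by ring
    _ = Real.exp ε * Real.exp (-ε * ℓ x' y / (2 * Δ)) *
        ∑ y' : Y, Real.exp (-ε * ℓ x y' / (2 * Δ)) := by
        rw [← Real.exp_add, add_halves]
end

section
/- Let h, h' ∈ ℕ^d be histograms with ||h - h'||_∞ ≤ 1 and either h ≤ h' coordinatewise or h ≥ h' coordinatewise. For a sequence s of k distinct indices define L(h,s) = max_{i∈[k]} (h_(i) - h[s[i]]), where h_(i) is the i-th largest entry of h. Then |L(h,s) - L(h',s)| ≤ 1 for every such s; i.e., the loss L has sensitivity 1. -/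
/-- The `j`-th largest entry (1-indexed) of the histogram `h`. -/
def orderStat {d : ℕ} (h : Fin d → ℕ) (j : ℕ) : ℕ :=
  (List.insertionSort (· ≥ ·) (List.ofFn h)).getD (j - 1) 0

/-- The loss `L(h, s) = max_{i ∈ [k]} (h_(i) - h[s i])` of a length-`k` sequence `s`. -/
def seqLoss {d k : ℕ} [NeZero k] (h : Fin d → ℕ) (s : Fin k → Fin d) : ℤ :=
  Finset.univ.sup' Finset.univ_nonempty
    (fun i : Fin k => (orderStat h ((i : ℕ) + 1) : ℤ) - (h (s i) : ℤ))

lemma countP_ofFn {n : ℕ} (f : Fin n → ℕ) (p : ℕ → Bool) :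
    (List.ofFn f).countP p = (Finset.univ.filter (fun i => p (f i))).card := by
  induction n with
  | zero => simp
  | succ n ih =>
    rw [List.ofFn_succ, List.countP_cons, ih,
      Fin.card_filter_univ_succ (p := fun i => p (f i))]
    by_cases hp : p (f 0) <;> simp [hp]

lemma orderStat_le_iff {d : ℕ} (h : Fin d → ℕ) {j : ℕ} (hj : j < d) (a : ℕ) :
    a ≤ orderStat h (j + 1) ↔ j < (Finset.univ.filter (fun i => a ≤ h i)).card := by
  classical
  set L := List.insertionSort (· ≥ ·) (List.ofFn h) with hL
  have hlen : L.length = d := by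
    rw [hL, List.length_insertionSort, List.length_ofFn]
  have hsorted : L.Pairwise (· ≥ ·) := List.pairwise_insertionSort _ _
  have hanti : Antitone L.get := by
    intro x y hxy
    exact hsorted.rel_get_of_le hxy
  have hj' : j < L.length := by omega
  have key := Tuple.lt_card_ge_iff_apply_ge_of_antitone (f := L.get) (a := a) (j := ⟨j, hj'⟩) hanti
  have hgj : L.get ⟨j, hj'⟩ = orderStat h (j + 1) := by
    simp only [orderStat, Nat.add_sub_cancel, ← hL]
    rw [List.getD_eq_getElem?_getD, List.getElem?_eq_getElem hj']
    simp
  have hcard : Fintype.card {i // a ≤ L.get i} = (Finset.univ.filter (fun i => a ≤ h i)).card := by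
    rw [Fintype.card_subtype]
    have h1 := countP_ofFn L.get (fun x => decide (a ≤ x))
    have h3 := countP_ofFn h (fun x => decide (a ≤ x))
    rw [List.ofFn_get] at h1
    have h2 : L.countP (fun x => decide (a ≤ x))
        = (List.ofFn h).countP (fun x => decide (a ≤ x)) :=
      (List.perm_insertionSort _ _).countP_eq _
    simp only [decide_eq_true_eq] at h1 h3
    rw [← h1, h2, h3]
  rw [hgj, ← Fintype.card_subtype, hcard] at key
  rw [← key]


lemma orderStat_le_orderStat {d : ℕ} {h h' : Fin d → ℕ} (hle : ∀ i, h i ≤ h' i)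
    {j : ℕ} (hj : j < d) : orderStat h (j + 1) ≤ orderStat h' (j + 1) := by
  rw [orderStat_le_iff h' hj]
  have := (orderStat_le_iff h hj (orderStat h (j + 1))).1 le_rfl
  refine this.trans_le (Finset.card_le_card ?_)
  intro i hi
  simp only [Finset.mem_filter, Finset.mem_univ, true_and] at hi ⊢
  exact hi.trans (hle i)

lemma orderStat_le_succ {d : ℕ} {h h' : Fin d → ℕ} (hc : ∀ i, h' i ≤ h i + 1)
    {j : ℕ} (hj : j < d) : orderStat h' (j + 1) ≤ orderStat h (j + 1) + 1 := by
  have : orderStat h' (j + 1) - 1 ≤ orderStat h (j + 1) := by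
    rw [orderStat_le_iff h hj]
    have := (orderStat_le_iff h' hj (orderStat h' (j + 1))).1 le_rfl
    refine this.trans_le (Finset.card_le_card ?_)
    intro i hi
    simp only [Finset.mem_filter, Finset.mem_univ, true_and] at hi ⊢
    have := hc i
    omega
  omega

lemma seqLoss_close {d k : ℕ} [NeZero k] (hkd : k ≤ d) (h h' : Fin d → ℕ)
    (hle : ∀ i, h i ≤ h' i) (hc : ∀ i, h' i ≤ h i + 1) (s : Fin k → Fin d) :
    |seqLoss h s - seqLoss h' s| ≤ 1 := by
  rw [abs_sub_le_iff]
  constructor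
  · rw [sub_le_iff_le_add]
    apply Finset.sup'_le
    intro i _
    have h1 : orderStat h ((i : ℕ) + 1) ≤ orderStat h' ((i : ℕ) + 1) :=
      orderStat_le_orderStat hle (lt_of_lt_of_le i.isLt hkd)
    have h2 : h' (s i) ≤ h (s i) + 1 := hc (s i)
    have h3 : (orderStat h' ((i : ℕ) + 1) : ℤ) - (h' (s i) : ℤ) ≤ seqLoss h' s := by
      unfold seqLoss
      exact Finset.le_sup' (fun i : Fin k => (orderStat h' ((i : ℕ) + 1) : ℤ) - (h' (s i) : ℤ))
        (Finset.mem_univ i)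
    unfold seqLoss at h3 ⊢
    push_cast at h3 ⊢
    omega
  · rw [sub_le_iff_le_add]
    apply Finset.sup'_le
    intro i _
    have h1 : orderStat h' ((i : ℕ) + 1) ≤ orderStat h ((i : ℕ) + 1) + 1 :=
      orderStat_le_succ hc (lt_of_lt_of_le i.isLt hkd)
    have h2 : h (s i) ≤ h' (s i) := hle (s i)
    have h3 : (orderStat h ((i : ℕ) + 1) : ℤ) - (h (s i) : ℤ) ≤ seqLoss h s := by
      unfold seqLoss
      exact Finset.le_sup' (fun i : Fin k => (orderStat h ((i : ℕ) + 1) : ℤ) - (h (s i) : ℤ))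
        (Finset.mem_univ i)
    unfold seqLoss at h3 ⊢
    push_cast at h3 ⊢
    omega

/-- Sensitivity of the joint loss: if `h` and `h'` are neighboring histograms
(`‖h - h'‖_∞ ≤ 1` with the differences of uniform sign), then for every injective
sequence `s`, `|L(h,s) - L(h',s)| ≤ 1`. -/
theorem seqLoss_sensitivity {d k : ℕ} [NeZero k] (hkd : k ≤ d)
    (h h' : Fin d → ℕ)
    (hclose : ∀ i, (h i : ℤ) - (h' i : ℤ) ≤ 1 ∧ (h' i : ℤ) - (h i : ℤ) ≤ 1)
    (hmono : (∀ i, h i ≤ h' i) ∨ (∀ i, h' i ≤ h i))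
    (s : Fin k → Fin d) (hs : Function.Injective s) :
    |seqLoss h s - seqLoss h' s| ≤ 1 := by
  rcases hmono with hle | hle
  · refine seqLoss_close hkd h h' hle (fun i => ?_) s
    have := (hclose i).2; omega
  · rw [abs_sub_comm]
    refine seqLoss_close hkd h' h hle (fun i => ?_) s
    have := (hclose i).1; omega
end

section
/- Let h ∈ ℕ^d, d ≥ k, τ ≥ 1, and c(r,j) = |{ j' ∈ [d] : h[j'] ≥ h_(j) - r }|. For i ∈ [k], let G_{≥τ}(i) be the set of injective sequences s : [k] → [d] with h[s[j]] > h_(j) - τ for all j < i and h[s[i]] ≤ h_(i) - τ. Then |G_{≥τ}(i)| = (∏_{j=1}^{i-1} (c(τ-1,j) - (j-1))) · (d - c(τ-1,i)) · (∏_{j=i+1}^{k} (d - (j-1))). -/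
/-- `c(r, j) = |{ j' ∈ [d] : h[j'] ≥ h_(j) - r }|`. -/
def cnt {d : ℕ} (h : Fin d → ℕ) (r j : ℕ) : ℕ :=
  (Finset.univ.filter (fun j' : Fin d => (orderStat h j : ℤ) - (r : ℤ) ≤ (h j' : ℤ))).card

open Classical in
/-- `G_{≥τ}(i)`: the injective sequences `s : [k] → [d]` with `h[s j] > h_(j) - τ` for all
`j < i` and `h[s i] ≤ h_(i) - τ` (positions 1-indexed). -/
noncomputable def groupGeTau {d k : ℕ} (h : Fin d → ℕ) (τ i : ℕ) :
    Finset (Fin k → Fin d) :=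
  Finset.univ.filter (fun s : Fin k → Fin d =>
    Function.Injective s ∧
    (∀ j : Fin k, (j : ℕ) + 1 < i →
      (orderStat h ((j : ℕ) + 1) : ℤ) - (τ : ℤ) < (h (s j) : ℤ)) ∧
    (∀ j : Fin k, (j : ℕ) + 1 = i →
      (h (s j) : ℤ) ≤ (orderStat h ((j : ℕ) + 1) : ℤ) - (τ : ℤ)))


open Finset

theorem count_inj_constrained {α : Type*} [DecidableEq α] [Fintype α] :
    ∀ (k : ℕ) (D : Fin k → Finset α),
    (∀ j j' : Fin k, j' < j → D j' ⊆ D j ∨ Disjoint (D j') (D j)) →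
    (Finset.univ.filter (fun s : Fin k → α => Function.Injective s ∧ ∀ j, s j ∈ D j)).card
      = ∏ j : Fin k, ((D j).card -
          (Finset.univ.filter (fun j' : Fin k => j' < j ∧ (D j').Nonempty ∧ D j' ⊆ D j)).card) := by
  intro k
  induction k with
  | zero =>
      intro D _
      simp [Finset.filter_true_of_mem, Function.injective_of_subsingleton]
  | succ k IH =>
      intro D hD
      set S := Finset.univ.filter
        (fun s : Fin (k+1) → α => Function.Injective s ∧ ∀ j, s j ∈ D j) with hS
      have hmap : ∀ s ∈ S, s 0 ∈ D 0 := by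
        intro s hs
        simp only [hS, mem_filter] at hs
        exact hs.2.2 0
      have hfib := Finset.card_eq_sum_card_fiberwise hmap
      -- fiber cardinality
      have hfibcard : ∀ a ∈ D 0,
          (S.filter (fun s => s 0 = a)).card
            = (Finset.univ.filter (fun t : Fin k → α =>
                Function.Injective t ∧ ∀ j, t j ∈ (D j.succ).erase a)).card := by
        intro a ha
        refine Finset.card_bij' (fun s _ => Fin.tail s) (fun t _ => Fin.cons a t) ?hi ?hj ?li ?ri
        case hi =>
          intro s hs
          simp only [hS, mem_filter, mem_univ, true_and] at hs ⊢
          obtain ⟨⟨hinj, hmem⟩, h0⟩ := hs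
          refine ⟨hinj.comp (Fin.succ_injective k), fun j => ?_⟩
          rw [Finset.mem_erase]
          refine ⟨?_, hmem j.succ⟩
          intro hcontra
          have : (j.succ : Fin (k+1)) = 0 := hinj (hcontra.trans h0.symm)
          exact (Fin.succ_ne_zero j) this
        case hj =>
          intro t ht
          simp only [mem_filter, mem_univ, true_and, hS] at ht ⊢
          obtain ⟨hinj, hmem⟩ := ht
          have hne : ∀ j, t j ≠ a := fun j => (Finset.mem_erase.mp (hmem j)).1
          refine ⟨⟨?_, fun j => ?_⟩, by simp⟩
          · intro x y hxy
            induction x using Fin.cases with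
            | zero =>
                induction y using Fin.cases with
                | zero => rfl
                | succ y => simp only [Fin.cons_zero, Fin.cons_succ] at hxy
                            exact absurd hxy.symm (hne y)
            | succ x =>
                induction y using Fin.cases with
                | zero => simp only [Fin.cons_zero, Fin.cons_succ] at hxy
                          exact absurd hxy (hne x)
                | succ y => simp only [Fin.cons_succ] at hxy
                            exact congrArg Fin.succ (hinj hxy)
          · induction j using Fin.cases with
            | zero => simpa using ha
            | succ j => simpa using (Finset.mem_erase.mp (hmem j)).2
        case li =>
          intro s hs
          simp only [mem_filter] at hs
          funext j
          induction j using Fin.cases with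
          | zero => simpa using hs.2.symm
          | succ j => simp [Fin.tail]
        case ri =>
          intro t ht
          funext j
          simp [Fin.tail]
      -- dichotomy for the shrunken family
      have hD' : ∀ a, ∀ j j' : Fin k, j' < j →
          (D j'.succ).erase a ⊆ (D j.succ).erase a ∨
            Disjoint ((D j'.succ).erase a) ((D j.succ).erase a) := by
        intro a j j' hlt
        rcases hD j.succ j'.succ (Fin.succ_lt_succ_iff.mpr hlt) with hsub | hdis
        · exact Or.inl (Finset.erase_subset_erase a hsub)
        · exact Or.inr (hdis.mono (Finset.erase_subset a _) (Finset.erase_subset a _))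
      have hiff : ∀ a ∈ D 0, ∀ m : Fin k, a ∈ D m.succ ↔ D 0 ⊆ D m.succ := by
        intro a ha m
        constructor
        · intro ham
          rcases hD m.succ 0 (Fin.succ_pos m) with hsub | hdis
          · exact hsub
          · exact absurd ham (Finset.disjoint_left.mp hdis ha)
        · intro hsub; exact hsub ha
      have key : ∀ a ∈ D 0,
          (∏ j : Fin k, (((D j.succ).erase a).card -
            (Finset.univ.filter (fun j' : Fin k => j' < j ∧ ((D j'.succ).erase a).Nonempty ∧
              (D j'.succ).erase a ⊆ (D j.succ).erase a)).card))
          = ∏ j : Fin k, ((D j.succ).card -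
            (Finset.univ.filter (fun j' : Fin (k+1) => j' < j.succ ∧ (D j').Nonempty ∧
              D j' ⊆ D j.succ)).card) := by
        intro a ha
        by_cases hdeg : ∃ j0 : Fin k, D j0.succ = {a}
        · obtain ⟨j0, hj0⟩ := hdeg
          have hzL : (((D j0.succ).erase a).card -
              (Finset.univ.filter (fun j' : Fin k => j' < j0 ∧ ((D j'.succ).erase a).Nonempty ∧
                (D j'.succ).erase a ⊆ (D j0.succ).erase a)).card) = 0 := by
            have h0 : ((D j0.succ).erase a).card = 0 := by rw [hj0]; simp
            rw [h0]
            exact Nat.zero_sub _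
          have hzR : ((D j0.succ).card -
              (Finset.univ.filter (fun j' : Fin (k+1) => j' < j0.succ ∧ (D j').Nonempty ∧
                D j' ⊆ D j0.succ)).card) = 0 := by
            have h1 : (D j0.succ).card = 1 := by rw [hj0]; simp
            have hmem0 : (0 : Fin (k+1)) ∈ Finset.univ.filter
                (fun j' : Fin (k+1) => j' < j0.succ ∧ (D j').Nonempty ∧ D j' ⊆ D j0.succ) := by
              refine Finset.mem_filter.mpr ⟨Finset.mem_univ _, Fin.succ_pos j0, ⟨a, ha⟩, ?_⟩
              exact (hiff a ha j0).mp (by rw [hj0]; simp)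
            have h2 : 1 ≤ (Finset.univ.filter
                (fun j' : Fin (k+1) => j' < j0.succ ∧ (D j').Nonempty ∧ D j' ⊆ D j0.succ)).card :=
              Finset.card_pos.mpr ⟨0, hmem0⟩
            rw [h1]
            exact Nat.sub_eq_zero_of_le h2
          rw [Finset.prod_eq_zero (Finset.mem_univ j0) hzL,
            Finset.prod_eq_zero (Finset.mem_univ j0) hzR]
        · push_neg at hdeg
          refine Finset.prod_congr rfl fun j _ => ?_
          -- split the (k+1)-indexed filter
          have hsplit : (Finset.univ.filter (fun j' : Fin (k+1) => j' < j.succ ∧ (D j').Nonempty ∧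
                D j' ⊆ D j.succ)).card
              = (if a ∈ D j.succ then 1 else 0) +
                (Finset.univ.filter (fun j' : Fin k => j' < j ∧ (D j'.succ).Nonempty ∧
                  D j'.succ ⊆ D j.succ)).card := by
            rw [Finset.card_filter, Finset.card_filter, Fin.sum_univ_succ]
            congr 1
            · simp only [Fin.succ_pos, true_and]
              have hne0 : (D 0).Nonempty := ⟨a, ha⟩
              by_cases hmem : a ∈ D j.succ
              · simp [hmem, hne0, (hiff a ha j).mp hmem]
              · have : ¬ D 0 ⊆ D j.succ := fun hsub => hmem (hsub ha)
                simp [hmem, this]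
            · refine Finset.sum_congr rfl fun j'' _ => ?_
              simp [Fin.succ_lt_succ_iff]
          have hfilter_eq : (Finset.univ.filter (fun j' : Fin k => j' < j ∧
                ((D j'.succ).erase a).Nonempty ∧ (D j'.succ).erase a ⊆ (D j.succ).erase a)).card
              = (Finset.univ.filter (fun j' : Fin k => j' < j ∧ (D j'.succ).Nonempty ∧
                  D j'.succ ⊆ D j.succ)).card := by
            congr 1
            apply Finset.filter_congr
            intro j'' _
            constructor
            · rintro ⟨hlt, hne, hsub⟩
              refine ⟨hlt, hne.mono (Finset.erase_subset a _), ?_⟩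
              rcases hD j.succ j''.succ (Fin.succ_lt_succ_iff.mpr hlt) with h | h
              · exact h
              · obtain ⟨x, hx⟩ := hne
                have hx1 : x ∈ D j''.succ := Finset.mem_of_mem_erase hx
                have hx2 : x ∈ D j.succ := Finset.mem_of_mem_erase (hsub hx)
                exact absurd hx2 (Finset.disjoint_left.mp h hx1)
            · rintro ⟨hlt, hne, hsub⟩
              refine ⟨hlt, ?_, Finset.erase_subset_erase a hsub⟩
              rw [Finset.nonempty_iff_ne_empty]
              intro hemp
              rcases (Finset.erase_eq_empty_iff _ _).mp hemp with h | h
              · exact Finset.nonempty_iff_ne_empty.mp hne h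
              · exact hdeg j'' h
          rw [hsplit, hfilter_eq]
          by_cases hmem : a ∈ D j.succ
          · rw [Finset.card_erase_of_mem hmem]
            simp only [hmem, if_true]
            rw [Nat.sub_sub, Nat.add_comm]
          · rw [Finset.erase_eq_of_notMem hmem]
            simp only [hmem, if_false]
            rw [Nat.zero_add]
      -- assemble
      have hn0 : (Finset.univ.filter (fun j' : Fin (k+1) => j' < 0 ∧ (D j').Nonempty ∧
          D j' ⊆ D 0)).card = 0 := by
        rw [Finset.card_eq_zero]
        apply Finset.filter_false_of_mem
        intro j' _
        rintro ⟨hlt, -⟩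
        exact absurd hlt (Fin.not_lt_zero j')
      rw [hfib]
      have : ∀ a ∈ D 0, (S.filter (fun s => s 0 = a)).card
          = ∏ j : Fin k, ((D j.succ).card -
            (Finset.univ.filter (fun j' : Fin (k+1) => j' < j.succ ∧ (D j').Nonempty ∧
              D j' ⊆ D j.succ)).card) := by
        intro a ha
        rw [hfibcard a ha, IH _ (hD' a), key a ha]
      rw [Finset.sum_congr rfl this, Finset.sum_const, smul_eq_mul, Fin.prod_univ_succ, hn0,
        Nat.sub_zero]

lemma countP_ofFn_eq (p : ℕ → Prop) [DecidablePred p] :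
    ∀ {d : ℕ} (h : Fin d → ℕ),
      (List.ofFn h).countP (fun y => decide (p y))
        = (Finset.univ.filter (fun x => p (h x))).card
  | 0, h => by simp
  | (d+1), h => by
      rw [List.ofFn_succ, List.countP_cons, countP_ofFn_eq p (fun x => h x.succ),
        Finset.card_filter, Finset.card_filter, Fin.sum_univ_succ]
      simp [Nat.add_comm]

lemma orderStat_anti {d : ℕ} (h : Fin d → ℕ) {a b : ℕ} (ha : 1 ≤ a) (hab : a ≤ b) :
    orderStat h b ≤ orderStat h a := by
  unfold orderStat
  set L := List.insertionSort (· ≥ ·) (List.ofFn h) with hL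
  by_cases hb : b - 1 < L.length
  · have ha' : a - 1 < L.length := by omega
    rw [List.getD_eq_getElem _ _ hb, List.getD_eq_getElem _ _ ha']
    have hs : L.Pairwise (· ≥ ·) := List.pairwise_insertionSort _ _
    exact hs.rel_get_of_le (a := ⟨a-1, ha'⟩) (b := ⟨b-1, hb⟩) (by simp [Fin.le_def]; omega)
  · rw [List.getD_eq_default _ _ (by omega)]
    exact Nat.zero_le _

lemma le_cnt {d : ℕ} (h : Fin d → ℕ) (r : ℕ) {j : ℕ} (hj1 : 1 ≤ j) (hjd : j ≤ d) :
    j ≤ cnt h r j := by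
  have key : j ≤ (Finset.univ.filter (fun x => orderStat h j ≤ h x)).card := by
    rw [← countP_ofFn_eq]
    have hperm : (List.ofFn h).Perm (List.insertionSort (· ≥ ·) (List.ofFn h)) :=
      (List.perm_insertionSort _ _).symm
    rw [hperm.countP_eq]
    set L := List.insertionSort (· ≥ ·) (List.ofFn h) with hLdef
    have hlen : L.length = d := by rw [hLdef, List.length_insertionSort, List.length_ofFn]
    have hsorted : L.Pairwise (· ≥ ·) := List.pairwise_insertionSort _ _
    have htd : L.countP (fun y => decide (orderStat h j ≤ y))
        = (L.take j).countP (fun y => decide (orderStat h j ≤ y))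
          + (L.drop j).countP (fun y => decide (orderStat h j ≤ y)) := by
      conv_lhs => rw [← List.take_append_drop j L]
      rw [List.countP_append]
    rw [htd]
    have h1 : (L.take j).countP (fun y => decide (orderStat h j ≤ y)) = j := by
      have hlt : j - 1 < L.length := by omega
      have hos : orderStat h j = L[j-1] := by
        rw [orderStat, ← hLdef, List.getD_eq_getElem _ _ hlt]
      rw [List.countP_eq_length.mpr, List.length_take, hlen, min_eq_left hjd]
      intro y hy
      simp only [decide_eq_true_eq, hos]
      obtain ⟨m, hm, rfl⟩ := List.mem_take_iff_getElem.mp hy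
      have hmL : m < L.length := by omega
      have hmj : m ≤ j - 1 := by omega
      exact hsorted.rel_get_of_le (a := ⟨m, hmL⟩) (b := ⟨j-1, hlt⟩)
        (by simp [Fin.le_def]; omega)
    omega
  have hsub : (Finset.univ.filter (fun x => orderStat h j ≤ h x))
      ⊆ Finset.univ.filter (fun x : Fin d => (orderStat h j : ℤ) - (r : ℤ) ≤ (h x : ℤ)) := by
    intro x hx
    simp only [mem_filter, mem_univ, true_and] at hx ⊢
    omega
  exact le_trans key (le_trans (Finset.card_le_card hsub) (le_of_eq rfl))

/-- Counting formula for the merged tail subset: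
`|G_{≥τ}(i)| = (∏_{j<i} (c(τ-1,j) - (j-1))) · (d - c(τ-1,i)) · (∏_{j>i} (d - (j-1)))`. -/
theorem groupGeTau_card {d k : ℕ} (hkd : k ≤ d) (h : Fin d → ℕ)
    (τ : ℕ) (hτ : 1 ≤ τ) (i : ℕ) (hi1 : 1 ≤ i) (hik : i ≤ k) :
    ((groupGeTau (k := k) h τ i).card : ℤ) =
      (∏ j ∈ Finset.Icc 1 (i - 1), ((cnt h (τ - 1) j : ℤ) - ((j : ℤ) - 1))) *
        ((d : ℤ) - (cnt h (τ - 1) i : ℤ)) *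
        (∏ j ∈ Finset.Icc (i + 1) k, ((d : ℤ) - ((j : ℤ) - 1))) := by
  classical
  have hd1 : 1 ≤ d := le_trans (le_trans hi1 hik) hkd
  have hτc : ((τ - 1 : ℕ) : ℤ) = (τ : ℤ) - 1 := by omega
  set A : ℕ → Finset (Fin d) := fun m =>
    Finset.univ.filter (fun x => (orderStat h m : ℤ) - ((τ - 1 : ℕ) : ℤ) ≤ (h x : ℤ)) with hA
  have hAcard : ∀ m, (A m).card = cnt h (τ - 1) m := fun m => rfl
  have hAmono : ∀ {m m'}, 1 ≤ m → m ≤ m' → A m ⊆ A m' := by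
    intro m m' h1 hmm x hx
    simp only [hA, mem_filter, mem_univ, true_and] at hx ⊢
    have := orderStat_anti h h1 hmm
    omega
  have hAne : ∀ m, 1 ≤ m → m ≤ d → (A m).Nonempty := by
    intro m h1 h2
    rw [← Finset.card_pos, hAcard]
    exact lt_of_lt_of_le h1 (le_cnt h _ h1 h2)
  have hcle : ∀ m, cnt h (τ - 1) m ≤ d := by
    intro m
    calc cnt h (τ - 1) m ≤ Finset.univ.card := Finset.card_filter_le _ _
    _ = d := by simp
  set D : Fin k → Finset (Fin d) := fun j =>
    if (j : ℕ) + 1 < i then A ((j : ℕ) + 1)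
    else if (j : ℕ) + 1 = i then (A i)ᶜ
    else Finset.univ with hDdef
  have hDlt : ∀ j : Fin k, (j : ℕ) + 1 < i → D j = A ((j : ℕ) + 1) := by
    intro j hj; simp only [hDdef, hj, if_true]
  have hDeq : ∀ j : Fin k, (j : ℕ) + 1 = i → D j = (A i)ᶜ := by
    intro j hj; simp only [hDdef, hj, if_true, if_neg (by omega : ¬ (j : ℕ) + 1 < i)]
  have hDgt : ∀ j : Fin k, i < (j : ℕ) + 1 → D j = Finset.univ := by
    intro j hj
    simp only [hDdef, if_neg (by omega : ¬ (j : ℕ) + 1 < i),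
      if_neg (by omega : ¬ (j : ℕ) + 1 = i)]
  have hG : groupGeTau (k := k) h τ i
      = Finset.univ.filter (fun s : Fin k → Fin d =>
          Function.Injective s ∧ ∀ j, s j ∈ D j) := by
    ext s
    simp only [groupGeTau, mem_filter, mem_univ, true_and]
    constructor
    · rintro ⟨hinj, hc1, hc2⟩
      refine ⟨hinj, fun j => ?_⟩
      rcases lt_trichotomy ((j : ℕ) + 1) i with hj | hj | hj
      · have := hc1 j hj
        rw [hDlt j hj]
        simp only [hA, mem_filter, mem_univ, true_and]
        omega
      · have := hc2 j hj
        rw [hDeq j hj, Finset.mem_compl]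
        simp only [hA, mem_filter, mem_univ, true_and]
        rw [← hj]
        omega
      · rw [hDgt j hj]; exact mem_univ _
    · rintro ⟨hinj, hmem⟩
      refine ⟨hinj, fun j hj => ?_, fun j hj => ?_⟩
      · have := hmem j
        rw [hDlt j hj] at this
        simp only [hA, mem_filter, mem_univ, true_and] at this
        omega
      · have := hmem j
        rw [hDeq j hj, Finset.mem_compl] at this
        simp only [hA, mem_filter, mem_univ, true_and] at this
        rw [← hj] at this
        omega
  have hdich : ∀ j j' : Fin k, j' < j → D j' ⊆ D j ∨ Disjoint (D j') (D j) := by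
    intro j j' hlt
    have hlt' : (j' : ℕ) < (j : ℕ) := hlt
    rcases lt_trichotomy ((j : ℕ) + 1) i with hj | hj | hj
    · left
      rw [hDlt j hj, hDlt j' (by omega)]
      exact hAmono (by omega) (by omega)
    · right
      rw [hDeq j hj, hDlt j' (by omega)]
      exact disjoint_compl_right.mono_left (hAmono (by omega) (by omega))
    · left
      rw [hDgt j hj]
      exact Finset.subset_univ _
  rw [hG, count_inj_constrained k D hdich]
  -- compute the factor sets
  by_cases hdeg : cnt h (τ - 1) i = d
  · -- degenerate: both sides 0
    have hi0 : i - 1 < k := by omega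
    set j0 : Fin k := ⟨i - 1, hi0⟩ with hj0
    have hj0i : (j0 : ℕ) + 1 = i := by simp [hj0]; omega
    have hcard0 : (D j0).card = 0 := by
      rw [hDeq j0 hj0i, Finset.card_compl, hAcard]
      simp [hdeg]
    rw [Finset.prod_eq_zero (Finset.mem_univ j0) (by rw [hcard0]; exact Nat.zero_sub _)]
    have : ((d : ℤ) - (cnt h (τ - 1) i : ℤ)) = 0 := by rw [hdeg]; ring
    rw [this]
    ring
  · have hclt : cnt h (τ - 1) i < d := lt_of_le_of_ne (hcle i) hdeg
    have hcompl_card : ((A i)ᶜ).card = d - cnt h (τ - 1) i := by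
      rw [Finset.card_compl, hAcard]; simp
    have hcompl_ne : ((A i)ᶜ).Nonempty := by
      rw [← Finset.card_pos, hcompl_card]; omega
    -- nonemptiness of all D j
    have hDne : ∀ j : Fin k, (D j).Nonempty := by
      intro j
      rcases lt_trichotomy ((j : ℕ) + 1) i with hj | hj | hj
      · rw [hDlt j hj]; exact hAne _ (by omega) (by omega)
      · rw [hDeq j hj]; exact hcompl_ne
      · rw [hDgt j hj]
        exact ⟨⟨0, by omega⟩, mem_univ _⟩
    -- the n-values
    have hn : ∀ j : Fin k,
        (Finset.univ.filter (fun j' : Fin k =>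
          j' < j ∧ (D j').Nonempty ∧ D j' ⊆ D j)).card
        = if (j : ℕ) + 1 = i then 0 else (j : ℕ) := by
      intro j
      by_cases hj : (j : ℕ) + 1 = i
      · rw [if_pos hj, Finset.card_eq_zero]
        rw [Finset.filter_false_of_mem]
        rintro j' - ⟨hlt, hne, hsub⟩
        have hlt' : (j' : ℕ) < (j : ℕ) := hlt
        rw [hDlt j' (by omega)] at hne hsub
        rw [hDeq j hj] at hsub
        obtain ⟨x, hx⟩ := hne
        have h1 : x ∈ A i := hAmono (by omega) (by omega) hx
        have h2 : x ∈ (A i)ᶜ := hsub hx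
        exact absurd h1 (Finset.mem_compl.mp h2)
      · rw [if_neg hj]
        have : (Finset.univ.filter (fun j' : Fin k =>
            j' < j ∧ (D j').Nonempty ∧ D j' ⊆ D j))
            = Finset.univ.filter (fun j' : Fin k => j' < j) := by
          apply Finset.filter_congr
          intro j' _
          refine ⟨fun hx => hx.1, fun hlt => ?_⟩
          · 
            have hlt' : (j' : ℕ) < (j : ℕ) := hlt
            refine ⟨hlt, hDne j', ?_⟩
            rcases lt_trichotomy ((j : ℕ) + 1) i with hjj | hjj | hjj
            · rw [hDlt j hjj, hDlt j' (by omega)]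
              exact hAmono (by omega) (by omega)
            · exact absurd hjj hj
            · rw [hDgt j hjj]; exact Finset.subset_univ _
        rw [this]
        have : Finset.univ.filter (fun j' : Fin k => j' < j) = Finset.Iio j := by
          ext x; simp
        rw [this, Fin.card_Iio]
    -- the card values
    have hcard : ∀ j : Fin k, (D j).card =
        if (j : ℕ) + 1 < i then cnt h (τ - 1) ((j : ℕ) + 1)
        else if (j : ℕ) + 1 = i then d - cnt h (τ - 1) i
        else d := by
      intro j
      rcases lt_trichotomy ((j : ℕ) + 1) i with hj | hj | hj
      · rw [if_pos hj, hDlt j hj, hAcard]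
      · rw [if_neg (by omega), if_pos hj, hDeq j hj, hcompl_card]
      · rw [if_neg (by omega), if_neg (by omega), hDgt j hj]
        simp
    -- pass to ℤ and compute factor-wise
    set g : ℕ → ℤ := fun m =>
      if m + 1 < i then (cnt h (τ - 1) (m + 1) : ℤ) - (m : ℤ)
      else if m + 1 = i then (d : ℤ) - (cnt h (τ - 1) i : ℤ)
      else (d : ℤ) - (m : ℤ) with hg
    have hfactor : ∀ j : Fin k,
        (((D j).card - (Finset.univ.filter (fun j' : Fin k =>
            j' < j ∧ (D j').Nonempty ∧ D j' ⊆ D j)).card : ℕ) : ℤ)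
        = g ((j : ℕ)) := by
      intro j
      rw [hcard j, hn j, hg]
      rcases lt_trichotomy ((j : ℕ) + 1) i with hj | hj | hj
      · have h1 : (j : ℕ) + 1 ≤ cnt h (τ - 1) ((j : ℕ) + 1) :=
          le_cnt h _ (by omega) (by omega)
        simp only [if_pos hj, if_neg (by omega : ¬ (j : ℕ) + 1 = i)]
        omega
      · simp only [if_neg (by omega : ¬ (j : ℕ) + 1 < i), if_pos hj]
        have := hcle i
        have : (j : ℕ) < k := j.isLt
        omega
      · simp only [if_neg (by omega : ¬ (j : ℕ) + 1 < i),
          if_neg (by omega : ¬ (j : ℕ) + 1 = i)]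
        have : (j : ℕ) < k := j.isLt
        omega
    have hprod : ((∏ j : Fin k, ((D j).card - (Finset.univ.filter (fun j' : Fin k =>
        j' < j ∧ (D j').Nonempty ∧ D j' ⊆ D j)).card) : ℕ) : ℤ)
        = ∏ m ∈ Finset.range k, g m := by
      rw [Nat.cast_prod, ← Fin.prod_univ_eq_prod_range]
      exact Finset.prod_congr rfl fun j _ => hfactor j
    rw [hprod]
    rw [Finset.range_eq_Ico, ← Finset.prod_Ico_consecutive g
      (Nat.zero_le (i - 1)) (by omega : i - 1 ≤ k),
      Finset.prod_eq_prod_Ico_succ_bot (by omega : i - 1 < k) g]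
    have hi1' : i - 1 + 1 = i := by omega
    rw [hi1']
    have hmid : g (i - 1) = (d : ℤ) - (cnt h (τ - 1) i : ℤ) := by
      rw [hg]
      simp [hi1']
    have hleft : ∏ m ∈ Finset.Ico 0 (i - 1), g m
        = ∏ j ∈ Finset.Icc 1 (i - 1), ((cnt h (τ - 1) j : ℤ) - ((j : ℤ) - 1)) := by
      have : Finset.Icc 1 (i - 1) = Finset.Ico 1 i := by
        rw [← Finset.Ico_add_one_right_eq_Icc, hi1']
      have hsh := Finset.prod_Ico_add'
        (fun j => ((cnt h (τ - 1) j : ℤ) - ((j : ℤ) - 1))) 0 (i - 1) 1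
      rw [show (0 : ℕ) + 1 = 1 from rfl, hi1'] at hsh
      rw [this, ← hsh]
      apply Finset.prod_congr rfl
      intro m hm
      rw [Finset.mem_Ico] at hm
      rw [hg]
      simp only [if_pos (by omega : m + 1 < i)]
      push_cast
      ring
    have hright : ∏ m ∈ Finset.Ico i k, g m
        = ∏ j ∈ Finset.Icc (i + 1) k, ((d : ℤ) - ((j : ℤ) - 1)) := by
      have : Finset.Icc (i + 1) k = Finset.Ico (i + 1) (k + 1) := by
        rw [← Finset.Ico_add_one_right_eq_Icc]
      have hsh := Finset.prod_Ico_add' (fun j : ℕ => ((d : ℤ) - ((j : ℤ) - 1))) i k 1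
      rw [this, ← hsh]
      apply Finset.prod_congr rfl
      intro m hm
      rw [Finset.mem_Ico] at hm
      rw [hg]
      simp only [if_neg (by omega : ¬ m + 1 < i), if_neg (by omega : ¬ m + 1 = i)]
      push_cast
      ring
    rw [hmid, hleft, hright]
    ring
end
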